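/- arXiv:2510.15911 — 4 statements merged into one kernel-verified Lean document; each statement's English description precedes it below -/
import Mathlib

section
/- Consider the Sleeping Beauty betting setup where a fraction a ∈ [-1,1] of wealth is wagered on tails before sleeping and a fraction b ∈ [-1,1] of wealth is wagered on tails at each waking, at 1:1 odds with a fair coin. The two-experiment wealth multiplier under one heads outcome and one tails outcome, G(a,b) = (1-a)(1-b)(1+a)(1+b)^2, is maximized over [-1,1] × [-1,1] at a = 0 and b = 1/3, where it attains the value 32/27; that is, for all a, b ∈ [-1,1], (1-a)(1-b)(1+a)(1+b)^2 ≤ 32/27, with equality exactly when a = 0 and b = 1/3. -/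
/-- In the Sleeping Beauty betting setup, the two-experiment wealth multiplier
under one heads and one tails outcome, `G(a,b) = (1-a)(1-b)(1+a)(1+b)^2`, is
maximized over `[-1,1] × [-1,1]` at `a = 0`, `b = 1/3`, where it attains the
value `32/27`: for all `a, b ∈ [-1,1]` we have `G(a,b) ≤ 32/27`, with equality
iff `a = 0 ∧ b = 1/3`. -/
theorem sleeping_beauty_growth_rate_maximized :
    ∀ a b : ℝ, a ∈ Set.Icc (-1 : ℝ) 1 → b ∈ Set.Icc (-1 : ℝ) 1 →
      (1 - a) * (1 - b) * (1 + a) * (1 + b) ^ 2 ≤ 32 / 27 ∧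
      ((1 - a) * (1 - b) * (1 + a) * (1 + b) ^ 2 = 32 / 27 ↔ a = 0 ∧ b = 1 / 3) := by
  rintro a b ⟨ha1, ha2⟩ ⟨hb1, hb2⟩
  have hQ : (0:ℝ) ≤ (1 - b) * (1 + b) ^ 2 := by nlinarith [sq_nonneg (1 + b)]
  have hle : (1 - a) * (1 - b) * (1 + a) * (1 + b) ^ 2 ≤ 32 / 27 := by
    nlinarith [sq_nonneg a, sq_nonneg (b - 1/3), mul_nonneg (sq_nonneg a) hQ,
      mul_nonneg (mul_nonneg (sq_nonneg (b - 1/3)) (by linarith : (0:ℝ) ≤ b + 5/3))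
        (by nlinarith : (0:ℝ) ≤ 1 - a^2)]
  refine ⟨hle, ?_, ?_⟩
  · intro heq
    have hb : b = 1/3 := by
      nlinarith [mul_nonneg (sq_nonneg a) hQ, sq_nonneg (b - 1/3),
        mul_nonneg (mul_nonneg (sq_nonneg (b - 1/3)) (by linarith : (0:ℝ) ≤ b + 5/3))
          (by nlinarith : (0:ℝ) ≤ 1 - a^2), sq_abs (b - 1/3), abs_nonneg (b - 1/3)]
    subst hb
    have ha : a = 0 := by nlinarith [sq_nonneg a]
    exact ⟨ha, by norm_num⟩
  · rintro ⟨rfl, rfl⟩; norm_num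
end

section
/- (Sleeping Kelly as a 'thirder' cannot be Dutch-booked.) Let α_OH, α_OT, α_WH, α_WT be real numbers in [-1,1] denoting the fraction of wealth won from the pre-sleep bet if the coin lands heads, from the pre-sleep bet if it lands tails, from the per-waking bet if it lands heads, and from the per-waking bet if it lands tails, respectively. Suppose the thirder bet-acceptance conditions hold: (1+α_OH)(1+α_OT) > 1 and (1+α_WH)(1+α_WT)^2 > 1. Then the two Dutch book conditions cannot both hold: it is not the case that both (1+α_OH)(1+α_WH) < 1 and (1+α_OT)(1+α_WT)^2 < 1. Indeed, (1+α_OH)(1+α_WH)(1+α_OT)(1+α_WT)^2 > 1. -/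
/-- Sleeping Kelly as a "thirder" cannot be Dutch-booked: if the thirder
bet-acceptance conditions `(1+α_OH)(1+α_OT) > 1` and `(1+α_WH)(1+α_WT)^2 > 1`
hold for `α`'s in `[-1,1]`, then the two Dutch book conditions cannot both
hold; indeed `(1+α_OH)(1+α_WH)(1+α_OT)(1+α_WT)^2 > 1`. -/
theorem sleeping_kelly_thirder_no_dutch_book
    (αOH αOT αWH αWT : ℝ)
    (hOH : αOH ∈ Set.Icc (-1 : ℝ) 1) (hOT : αOT ∈ Set.Icc (-1 : ℝ) 1)
    (hWH : αWH ∈ Set.Icc (-1 : ℝ) 1) (hWT : αWT ∈ Set.Icc (-1 : ℝ) 1)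
    (hacceptO : (1 + αOH) * (1 + αOT) > 1)
    (hacceptW : (1 + αWH) * (1 + αWT) ^ 2 > 1) :
    ¬ ((1 + αOH) * (1 + αWH) < 1 ∧ (1 + αOT) * (1 + αWT) ^ 2 < 1) ∧
    (1 + αOH) * (1 + αWH) * (1 + αOT) * (1 + αWT) ^ 2 > 1 := by
  obtain ⟨h1,_⟩ := hOH
  obtain ⟨h2,_⟩ := hOT
  obtain ⟨h3,_⟩ := hWH
  obtain ⟨h4,_⟩ := hWT
  have p1 : (0:ℝ) ≤ 1 + αOH := by linarith
  have p2 : (0:ℝ) ≤ 1 + αOT := by linarith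
  have p3 : (0:ℝ) ≤ 1 + αWH := by linarith
  have p4 : (0:ℝ) ≤ (1 + αWT) ^ 2 := sq_nonneg _
  have key : (1 + αOH) * (1 + αWH) * (1 + αOT) * (1 + αWT) ^ 2 > 1 := by
    nlinarith [mul_nonneg p1 p2, mul_nonneg p3 p4]
  refine ⟨fun ⟨hA, hB⟩ => ?_, key⟩
  nlinarith [key, hA, hB, mul_nonneg p1 p3, mul_nonneg p2 p4]
end

section
/- (A 'halfer' Sleeping Beauty is vulnerable to a Dutch book.) There exist real numbers α_OH, α_OT, α_WH, α_WT in [-1,1] such that the halfer bet-acceptance conditions hold, namely (1+α_OH)(1+α_OT) > 1 and (1+α_WH)(1+α_WT) > 1, while both Dutch book conditions also hold, namely (1+α_OH)(1+α_WH) < 1 and (1+α_OT)(1+α_WT)^2 < 1. -/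
/-- A "halfer" Sleeping Beauty is vulnerable to a Dutch book: there exist
`α`'s in `[-1,1]` satisfying the halfer bet-acceptance conditions
`(1+α_OH)(1+α_OT) > 1` and `(1+α_WH)(1+α_WT) > 1`, while both Dutch book
conditions `(1+α_OH)(1+α_WH) < 1` and `(1+α_OT)(1+α_WT)^2 < 1` also hold. -/
theorem halfer_vulnerable_to_dutch_book :
    ∃ αOH αOT αWH αWT : ℝ,
      αOH ∈ Set.Icc (-1 : ℝ) 1 ∧ αOT ∈ Set.Icc (-1 : ℝ) 1 ∧
      αWH ∈ Set.Icc (-1 : ℝ) 1 ∧ αWT ∈ Set.Icc (-1 : ℝ) 1 ∧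
      (1 + αOH) * (1 + αOT) > 1 ∧
      (1 + αWH) * (1 + αWT) > 1 ∧
      (1 + αOH) * (1 + αWH) < 1 ∧
      (1 + αOT) * (1 + αWT) ^ 2 < 1 := by
  refine ⟨-0.48, 1, 0.9, -0.4, ?_, ?_, ?_, ?_, ?_, ?_, ?_, ?_⟩ <;>
    norm_num [Set.mem_Icc]
end

section
/- (Explicit Dutch book against the halfer.) For every real ε with 0 < ε < 1/30, the choice α_WH = 1/2, α_WT = -1/3 + ε, α_OT = 1, α_OH = -1/3 - ε satisfies: all four values lie in [-1,1]; the halfer bet-acceptance conditions (1+α_OH)(1+α_OT) > 1 and (1+α_WH)(1+α_WT) > 1 hold; and both Dutch book conditions hold: if the coin lands heads her wealth shrinks, i.e. (1+α_OH)(1+α_WH) = 1 - (3/2)ε < 1, and if the coin lands tails her wealth shrinks, i.e. (1+α_OT)(1+α_WT)^2 = 2(2/3+ε)^2 < 1. -/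
/-- Explicit Dutch book against the halfer: for every `0 < ε < 1/30`, the
choice `α_WH = 1/2`, `α_WT = -1/3 + ε`, `α_OT = 1`, `α_OH = -1/3 - ε`
satisfies: all four values lie in `[-1,1]`; the halfer bet-acceptance
conditions hold; and both Dutch book conditions hold, with
`(1+α_OH)(1+α_WH) = 1 - (3/2)ε < 1` and `(1+α_OT)(1+α_WT)^2 = 2(2/3+ε)^2 < 1`. -/
theorem halfer_explicit_dutch_book (ε : ℝ) (hε0 : 0 < ε) (hε1 : ε < 1 / 30) :
    let αWH : ℝ := 1 / 2
    let αWT : ℝ := -1 / 3 + ε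
    let αOT : ℝ := 1
    let αOH : ℝ := -1 / 3 - ε
    αOH ∈ Set.Icc (-1 : ℝ) 1 ∧ αOT ∈ Set.Icc (-1 : ℝ) 1 ∧
    αWH ∈ Set.Icc (-1 : ℝ) 1 ∧ αWT ∈ Set.Icc (-1 : ℝ) 1 ∧
    (1 + αOH) * (1 + αOT) > 1 ∧
    (1 + αWH) * (1 + αWT) > 1 ∧
    (1 + αOH) * (1 + αWH) = 1 - (3 / 2) * ε ∧
    (1 + αOH) * (1 + αWH) < 1 ∧
    (1 + αOT) * (1 + αWT) ^ 2 = 2 * (2 / 3 + ε) ^ 2 ∧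
    (1 + αOT) * (1 + αWT) ^ 2 < 1 := by
  refine ⟨⟨by nlinarith, by nlinarith⟩, ⟨by norm_num, by norm_num⟩,
    ⟨by norm_num, by norm_num⟩, ⟨by nlinarith, by nlinarith⟩,
    by nlinarith, by nlinarith, by ring, by nlinarith, by ring, by nlinarith⟩
end
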